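/- Suppose v : ℤ → ℂ^k represents a point of the skew shaped positroid S°_{λ/μ}, and suppose (a,i) and (a+1,i) are adjacent boxes in the i-th row of the boundary ribbon R(λ/μ), that is, i = λ̄_a and μ̄_{a+1} < i ≤ λ̄_{a+1} with 1 ≤ a ≤ n−k−1. Then V(a,i) = V(a+1,i). -/

import Mathlib

/-- The height `λ̄_a` of the `a`-th column (counted from the right) of the
partition `f = (f 1 ≥ ⋯ ≥ f k)` inside the `k × (n-k)` rectangle. -/
def colHeight (n k : ℕ) (f : ℕ → ℕ) (a : ℕ) : ℕ :=
  ((Finset.Icc 1 k).filter (fun i => n - k - a + 1 ≤ f i)).card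

/-- `b_i = n - k - μ_i + i`. -/
def bvec (n k : ℕ) (m : ℕ → ℕ) (i : ℕ) : ℕ := n - k - m i + i

/-- The short label `J(a,i) = {min (a+j-1) (b_j) : j = 1, …, i}`. -/
def shortLabel (n k : ℕ) (m : ℕ → ℕ) (a i : ℕ) : Finset ℕ :=
  (Finset.Icc 1 i).image (fun j => min (a + j - 1) (bvec n k m j))

/-- The label `I'(a,i) = J(a,i) ∪ {b_{i+1}, …, b_k}`. -/
def fullLabel (n k : ℕ) (m : ℕ → ℕ) (a i : ℕ) : Finset ℕ :=
  shortLabel n k m a i ∪ (Finset.Icc (i + 1) k).image (bvec n k m)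

/-- `I_μ = {b_1, …, b_k}`. -/
def Imu (n k : ℕ) (m : ℕ → ℕ) : Finset ℕ := (Finset.Icc 1 k).image (bvec n k m)

/-- The box `(a,i)` belongs to the skew diagram `λ/μ`. -/
def InSkew (n k : ℕ) (l m : ℕ → ℕ) (a i : ℕ) : Prop :=
  1 ≤ a ∧ a ≤ n - k ∧ 1 ≤ i ∧ i ≤ k ∧ colHeight n k m a < i ∧ i ≤ colHeight n k l a

/-- The box `(a,i)` belongs to the boundary ribbon `R(λ/μ)`. -/
def InRibbon (n k : ℕ) (l m : ℕ → ℕ) (a i : ℕ) : Prop :=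
  InSkew n k l m a i ∧ (a = 1 ∨ colHeight n k l (a - 1) ≤ i)

/-- `S` is the `r`-th entry of the Grassmann necklace `I_{λ/μ}`. -/
def IsNecklaceEntry (n k : ℕ) (l m : ℕ → ℕ) (r : ℕ) (S : Finset ℕ) : Prop :=
  (∃ a i, InRibbon n k l m a i ∧ r = a + i - 1 ∧ S = fullLabel n k m a i) ∨
  ((¬ ∃ a i, InRibbon n k l m a i ∧ r = a + i - 1) ∧ S = Imu n k m)

/-- The family `{v_j : j ∈ S}` is a basis of `ℂ^k`. -/
def IsBasisFam (k : ℕ) (v : ℤ → Fin k → ℂ) (S : Finset ℕ) : Prop :=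
  LinearIndependent ℂ (fun j : ↥S => v ((j : ℕ) : ℤ)) ∧
  Submodule.span ℂ ((fun j : ℕ => v (j : ℤ)) '' (S : Set ℕ)) = ⊤

/-- `v : ℤ → ℂ^k` represents a point of the skew shaped positroid `S°_{λ/μ}`. -/
def RepsPoint (n k : ℕ) (l m : ℕ → ℕ) (v : ℤ → Fin k → ℂ) : Prop :=
  (∀ j : ℤ, v (j + (n : ℤ)) = ((-1 : ℂ) ^ (k - 1)) • v j) ∧
  (∀ r ∈ Finset.Icc 1 n, ∀ S : Finset ℕ, IsNecklaceEntry n k l m r S → IsBasisFam k v S) ∧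
  (∀ a : ℕ, 1 ≤ a → a ≤ n - k →
    v ((a + colHeight n k m a : ℕ) : ℤ) ∈
      Submodule.span ℂ ((fun j : ℕ => v (j : ℤ)) ''
        ↑(Finset.Icc (a + colHeight n k m a + 1) (a + colHeight n k l a))))

/-- `V(a,i) = span{v_j : j ∈ J(a,i)}`. -/
noncomputable def Vspace (n k : ℕ) (m : ℕ → ℕ) (v : ℤ → Fin k → ℂ) (a i : ℕ) :
    Submodule ℂ (Fin k → ℂ) :=
  Submodule.span ℂ ((fun j : ℕ => v (j : ℤ)) '' ↑(shortLabel n k m a i))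

/-- `W^op_p = span(v_{b_1}, …, v_{b_p})`. -/
noncomputable def Wop (n k : ℕ) (m : ℕ → ℕ) (v : ℤ → Fin k → ℂ) (p : ℕ) :
    Submodule ℂ (Fin k → ℂ) :=
  Submodule.span ℂ ((fun j : ℕ => v (j : ℤ)) '' ↑((Finset.Icc 1 p).image (bvec n k m)))

/-- `W_p = span(v_{b_{k-p+1}}, …, v_{b_k})`. -/
noncomputable def Wsp (n k : ℕ) (m : ℕ → ℕ) (v : ℤ → Fin k → ℂ) (p : ℕ) :
    Submodule ℂ (Fin k → ℂ) :=
  Submodule.span ℂ ((fun j : ℕ => v (j : ℤ)) '' ↑((Finset.Icc (k - p + 1) k).image (bvec n k m)))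


/-!
Let `p = μ̄_a`. For `j ≤ p` we have `b_j ≤ a + j - 1`, and for `j > p` we have `b_j ≥ a + j`, so
`J(a,i) = {b_1, …, b_p} ∪ {a+p, …, a+i-1}` while `J(a+1,i) ⊇ {b_1, …, b_p} ∪ {a+p+1, …, a+i}`.
Condition (ii) of the positroid puts `v_{a+p}` in the span of `v_{a+p+1}, …, v_{a+i}`, hence
`V(a,i) ≤ V(a+1,i)`. Since `(a,i)` lies on the ribbon, `J(a,i) ⊆ I'(a,i)` is part of a basis, so
`dim V(a,i) = |J(a,i)| = i ≥ dim V(a+1,i)`, and the inclusion is an equality.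
-/

lemma finrank_span_image_le_card {K V ι : Type*} [DivisionRing K] [AddCommGroup V] [Module K V]
    (f : ι → V) (S : Finset ι) : Module.finrank K (Submodule.span K (f '' S)) ≤ S.card := by
  rw [Set.image_eq_range]
  exact (finrank_range_le_card (R := K) fun x : (S : Set ι) => f x).trans_eq (by simp)

lemma finrank_span_image_eq_card {K V ι : Type*} [DivisionRing K] [AddCommGroup V] [Module K V]
    {f : ι → V} {S : Finset ι} (hf : LinearIndependent K fun x : S => f x) :
    Module.finrank K (Submodule.span K (f '' S)) = S.card := by
  rw [Set.image_eq_range]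
  simpa using finrank_span_eq_card hf

lemma IsBasisFam.linearIndependent_of_subset {k : ℕ} {v : ℤ → Fin k → ℂ} {S T : Finset ℕ}
    (hT : IsBasisFam k v T) (hST : S ⊆ T) : LinearIndependent ℂ fun j : S => v (j : ℕ) :=
  hT.1.comp (fun j : S => (⟨j.1, hST j.2⟩ : T)) fun _ _ h => by
    ext; simpa using congrArg Subtype.val h

lemma colHeight_le (n k : ℕ) (f : ℕ → ℕ) (a : ℕ) : colHeight n k f a ≤ k := by
  unfold colHeight
  simpa using Finset.card_filter_le (Finset.Icc 1 k) fun i => n - k - a + 1 ≤ f i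

lemma colHeight_mono (n k : ℕ) (f : ℕ → ℕ) : Monotone (colHeight n k f) := by
  intro a a' h
  refine Finset.card_le_card fun x hx => ?_
  rw [Finset.mem_filter] at hx ⊢
  exact ⟨hx.1, by omega⟩

lemma le_colHeight_iff (n : ℕ) {k : ℕ} {f : ℕ → ℕ} (hf : AntitoneOn f (Set.Icc 1 k)) (a : ℕ) {j : ℕ}
    (hj : j ∈ Set.Icc 1 k) : j ≤ colHeight n k f a ↔ n - k - a + 1 ≤ f j := by
  have hj1 := hj.1
  unfold colHeight
  constructor
  · intro hjc
    by_contra hlt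
    have hsub : (Finset.Icc 1 k).filter (fun i => n - k - a + 1 ≤ f i) ⊆ Finset.Icc 1 (j - 1) := by
      intro x hx
      rw [Finset.mem_filter, Finset.mem_Icc] at hx
      refine Finset.mem_Icc.2 ⟨hx.1.1, ?_⟩
      by_contra hxj
      exact hlt (hx.2.trans (hf hj hx.1 (by omega)))
    have := Finset.card_le_card hsub
    rw [Nat.card_Icc] at this
    omega
  · intro hfj
    have hsub : Finset.Icc 1 j ⊆ (Finset.Icc 1 k).filter (fun i => n - k - a + 1 ≤ f i) := by
      intro x hx
      rw [Finset.mem_Icc] at hx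
      have hxk : x ∈ Set.Icc 1 k := ⟨hx.1, hx.2.trans hj.2⟩
      exact Finset.mem_filter.2 ⟨Finset.mem_Icc.2 hxk, hfj.trans (hf hxk hj hx.2)⟩
    simpa using Finset.card_le_card hsub

section Labels

variable {n k : ℕ} {m : ℕ → ℕ}

lemma bvec_le_of_le_colHeight (hm : AntitoneOn m (Set.Icc 1 k)) {a j : ℕ} (ha : 1 ≤ a)
    (hj : 1 ≤ j) (hjp : j ≤ colHeight n k m a) : bvec n k m j ≤ a + j - 1 := by
  have := (le_colHeight_iff n hm a ⟨hj, hjp.trans (colHeight_le n k m a)⟩).1 hjp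
  unfold bvec
  omega

lemma add_le_bvec_of_colHeight_lt (hm : AntitoneOn m (Set.Icc 1 k)) {a j : ℕ} (ha : a ≤ n - k)
    (hjk : j ≤ k) (hpj : colHeight n k m a < j) : a + j ≤ bvec n k m j := by
  have := (le_colHeight_iff n hm a ⟨by omega, hjk⟩).not.1 (by omega)
  unfold bvec
  omega

lemma card_shortLabel (hm : AntitoneOn m (Set.Icc 1 k)) (a : ℕ) {i : ℕ} (hik : i ≤ k) :
    (shortLabel n k m a i).card = i := by
  have hmono : StrictMonoOn (fun j => min (a + j - 1) (bvec n k m j)) (Set.Icc 1 i) := by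
    intro x ⟨hx1, hxi⟩ y ⟨hy1, hyi⟩ hxy
    have := hm ⟨hx1, hxi.trans hik⟩ ⟨hy1, hyi.trans hik⟩ hxy.le
    simp only [bvec]
    omega
  rw [shortLabel, Finset.card_image_of_injOn (by simpa using hmono.injOn), Nat.card_Icc]
  omega

lemma Icc_subset_shortLabel_succ (hm : AntitoneOn m (Set.Icc 1 k)) {a i : ℕ} (ha : a ≤ n - k)
    (hik : i ≤ k) :
    Finset.Icc (a + colHeight n k m a + 1) (a + i) ⊆ shortLabel n k m (a + 1) i := by
  intro t ht
  rw [Finset.mem_Icc] at ht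
  refine Finset.mem_image.2 ⟨t - a, Finset.mem_Icc.2 ⟨by omega, by omega⟩, ?_⟩
  have := add_le_bvec_of_colHeight_lt hm ha (j := t - a) (by omega) (by omega)
  omega

lemma shortLabel_subset_insert_shortLabel_succ (hm : AntitoneOn m (Set.Icc 1 k)) {a i : ℕ}
    (ha1 : 1 ≤ a) (ha : a ≤ n - k) (hik : i ≤ k) :
    shortLabel n k m a i ⊆ insert (a + colHeight n k m a) (shortLabel n k m (a + 1) i) := by
  intro t ht
  obtain ⟨j, hj, rfl⟩ := Finset.mem_image.1 ht
  rw [Finset.mem_Icc] at hj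
  rw [Finset.mem_insert]
  rcases le_or_gt j (colHeight n k m a) with hjp | hpj
  · have := bvec_le_of_le_colHeight hm ha1 hj.1 hjp
    exact Or.inr (Finset.mem_image.2 ⟨j, Finset.mem_Icc.2 hj, by omega⟩)
  · have := add_le_bvec_of_colHeight_lt hm ha (hj.2.trans hik) hpj
    rw [min_eq_left (by omega)]
    by_cases hjp : j = colHeight n k m a + 1
    · exact Or.inl (by omega)
    · exact Or.inr (Icc_subset_shortLabel_succ hm ha hik (Finset.mem_Icc.2 ⟨by omega, by omega⟩))

end Labels

section Vspace

variable {n k : ℕ} {l m : ℕ → ℕ} {v : ℤ → Fin k → ℂ}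

lemma Vspace_le_Vspace_succ (hm : AntitoneOn m (Set.Icc 1 k)) (hv : RepsPoint n k l m v)
    {a i : ℕ} (ha1 : 1 ≤ a) (ha : a ≤ n - k) (hi : i = colHeight n k l a) :
    Vspace n k m v a i ≤ Vspace n k m v (a + 1) i := by
  have hik : i ≤ k := hi ▸ colHeight_le n k l a
  have hmem : v ((a + colHeight n k m a : ℕ) : ℤ) ∈ Vspace n k m v (a + 1) i :=
    Submodule.span_mono
      (Set.image_mono (Finset.coe_subset.2 (Icc_subset_shortLabel_succ hm ha hik)))
      (hi ▸ hv.2.2 a ha1 ha)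
  calc Vspace n k m v a i
      ≤ Submodule.span ℂ ((fun j : ℕ => v (j : ℤ)) ''
          ↑(insert (a + colHeight n k m a) (shortLabel n k m (a + 1) i))) :=
        Submodule.span_mono (Set.image_mono
          (Finset.coe_subset.2 (shortLabel_subset_insert_shortLabel_succ hm ha1 ha hik)))
    _ = Vspace n k m v (a + 1) i := by
        rw [Finset.coe_insert, Set.image_insert_eq, Submodule.span_insert]
        exact sup_eq_right.2 ((Submodule.span_singleton_le_iff_mem _ _).2 hmem)

lemma finrank_Vspace_of_inRibbon (hm : AntitoneOn m (Set.Icc 1 k)) (hv : RepsPoint n k l m v)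
    {a i : ℕ} (hrib : InRibbon n k l m a i) : Module.finrank ℂ (Vspace n k m v a i) = i := by
  obtain ⟨ha1, ha, hi1, hik, -, -⟩ := hrib.1
  have hbasis : IsBasisFam k v (fullLabel n k m a i) :=
    hv.2.1 (a + i - 1) (Finset.mem_Icc.2 ⟨by omega, by omega⟩) _ (Or.inl ⟨a, i, hrib, rfl, rfl⟩)
  rw [Vspace, finrank_span_image_eq_card (f := fun j : ℕ => v j)
    (hbasis.linearIndependent_of_subset Finset.subset_union_left), card_shortLabel hm a hik]

end Vspace

theorem stmt12_general (n k : ℕ) (l m : ℕ → ℕ)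
    (hmmono : ∀ i j, 1 ≤ i → i ≤ j → j ≤ k → m j ≤ m i)
    (v : ℤ → Fin k → ℂ) (hv : RepsPoint n k l m v)
    (a i : ℕ) (ha1 : 1 ≤ a) (ha2 : a ≤ n - k - 1)
    (hi : i = colHeight n k l a)
    (h1 : colHeight n k m (a + 1) < i) :
    Vspace n k m v a i = Vspace n k m v (a + 1) i := by
  have hm : AntitoneOn m (Set.Icc 1 k) := fun x hx y hy hxy => hmmono x y hx.1 hxy hy.2
  have hik : i ≤ k := hi ▸ colHeight_le n k l a
  have hpi : colHeight n k m a < i := (colHeight_mono n k m a.le_succ).trans_lt h1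
  have hrib : InRibbon n k l m a i :=
    ⟨⟨ha1, by omega, by omega, hik, hpi, hi.le⟩, Or.inr (hi ▸ colHeight_mono n k l (a.sub_le 1))⟩
  refine Submodule.eq_of_le_of_finrank_le (Vspace_le_Vspace_succ hm hv ha1 (by omega) hi) ?_
  rw [finrank_Vspace_of_inRibbon hm hv hrib]
  exact (finrank_span_image_le_card _ _).trans (card_shortLabel hm (a + 1) hik).le

theorem stmt12 (n k : ℕ) (l m : ℕ → ℕ)
    (hk : 0 < k) (hkn : k < n)
    (hlmono : ∀ i j, 1 ≤ i → i ≤ j → j ≤ k → l j ≤ l i)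
    (hl1 : l 1 ≤ n - k)
    (hmmono : ∀ i j, 1 ≤ i → i ≤ j → j ≤ k → m j ≤ m i)
    (hml : ∀ i, 1 ≤ i → i ≤ k → m i ≤ l i)
    (v : ℤ → Fin k → ℂ) (hv : RepsPoint n k l m v)
    (a i : ℕ) (ha1 : 1 ≤ a) (ha2 : a ≤ n - k - 1)
    (hi : i = colHeight n k l a)
    (h1 : colHeight n k m (a + 1) < i) (h2 : i ≤ colHeight n k l (a + 1)) :
    Vspace n k m v a i = Vspace n k m v (a + 1) i :=
  stmt12_general n k l m hmmono v hv a i ha1 ha2 hi h1
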